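/- Let $c_k(u)$ be as above (number of $n$-tuples of non-negative integers summing to $k$ with weighted sum $u$), and set $m_k(u) = c_k(u) - c_k(u-1)$ (with $c_k(-1)=0$). Then $\sum_{u=0}^\infty m_k(u) x^u = \frac{(1-x^n)\cdots(1-x^{n+k-1})}{(1-x^2)\cdots(1-x^k)}$ as formal power series. -/
import Mathlib

open PowerSeries Finset

/-- The solution set. -/
def auxSet (n k u : ℕ) :=
  {i : Fin n → ℕ // (∑ j : Fin n, i j) = k ∧ (∑ j : Fin n, (j : ℕ) * i j) = u}

instance auxSetFinite (n k u : ℕ) : Finite (auxSet n k u) := by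
  apply Finite.of_injective (β := Fin n → Fin (k + 1))
    (fun x j => ⟨x.1 j, by
      have h := Finset.single_le_sum (f := x.1) (fun a _ => Nat.zero_le _) (Finset.mem_univ j)
      have h2 := x.2.1
      omega⟩)
  intro x y h
  exact Subtype.ext (funext fun j => congrArg Fin.val (congrFun h j))

/-- The counting function. -/
noncomputable def aux_cc (n k u : ℕ) : ℕ := Nat.card (auxSet n k u)

lemma aux_Ssplit {n : ℕ} (i : Fin (n + 1) → ℕ) :
    (∑ a : Fin (n + 1), i a) = (∑ a : Fin n, Fin.init i a) + i (Fin.last n) := by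
  rw [Fin.sum_univ_castSucc]; rfl

lemma aux_Wsplit {n : ℕ} (i : Fin (n + 1) → ℕ) :
    (∑ a : Fin (n + 1), (a : ℕ) * i a) =
      (∑ a : Fin n, (a : ℕ) * Fin.init i a) + n * i (Fin.last n) := by
  rw [Fin.sum_univ_castSucc]
  simp [Fin.init]

lemma aux_cc_zero (n u : ℕ) : aux_cc n 0 u = if u = 0 then 1 else 0 := by
  rcases eq_or_ne u 0 with rfl | hu
  · rw [if_pos rfl]
    have : Unique (auxSet n 0 0) := by
      refine ⟨⟨⟨fun _ => 0, by simp⟩⟩, ?_⟩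
      rintro ⟨i, h1, h2⟩
      apply Subtype.ext
      funext j
      exact (Finset.sum_eq_zero_iff.mp h1) j (Finset.mem_univ j)
    exact Nat.card_unique
  · rw [if_neg hu]
    have : IsEmpty (auxSet n 0 u) := by
      refine ⟨fun x => hu ?_⟩
      obtain ⟨i, h1, h2⟩ := x
      have hz : ∀ j ∈ Finset.univ, i j = 0 := Finset.sum_eq_zero_iff.mp h1
      rw [← h2]
      refine Finset.sum_eq_zero fun j hj => ?_
      rw [hz j hj, mul_zero]
    exact Nat.card_of_isEmpty

lemma aux_cc_one (k u : ℕ) : aux_cc 1 k u = if u = 0 then 1 else 0 := by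
  rcases eq_or_ne u 0 with rfl | hu
  · rw [if_pos rfl]
    have : Unique (auxSet 1 k 0) := by
      refine ⟨⟨⟨fun _ => k, by simp⟩⟩, ?_⟩
      rintro ⟨i, h1, h2⟩
      apply Subtype.ext
      funext j
      have : j = 0 := Subsingleton.elim _ _
      subst this
      simpa using h1
    exact Nat.card_unique
  · rw [if_neg hu]
    have : IsEmpty (auxSet 1 k u) := by
      refine ⟨fun x => hu ?_⟩
      obtain ⟨i, h1, h2⟩ := x
      rw [← h2]
      simp
    exact Nat.card_of_isEmpty

/-- Equivalence for the `i (last) = 0` part. -/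
def auxEquivZero (n k u : ℕ) :
    {x : auxSet (n + 1) k u // x.1 (Fin.last n) = 0} ≃ auxSet n k u where
  toFun x := ⟨Fin.init x.1.1, by
    have h1 := x.1.2.1
    have h2 := x.1.2.2
    rw [aux_Ssplit, x.2, add_zero] at h1
    rw [aux_Wsplit, x.2, mul_zero, add_zero] at h2
    exact ⟨h1, h2⟩⟩
  invFun j := ⟨⟨Fin.snoc j.1 0, by
      constructor
      · rw [aux_Ssplit]
        simp [j.2.1]
      · rw [aux_Wsplit]
        simp [j.2.2]⟩, by simp⟩
  left_inv x := by
    apply Subtype.ext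
    apply Subtype.ext
    show Fin.snoc (Fin.init x.1.1) 0 = x.1.1
    have h := Fin.snoc_init_self x.1.1
    rwa [x.2] at h
  right_inv j := by
    apply Subtype.ext
    simp only []
    exact Fin.init_snoc (α := fun _ : Fin (n + 1) => ℕ) 0 j.1

/-- Equivalence for the `i (last) ≠ 0` part, when `n ≤ u`. -/
def auxEquivPos (n k u : ℕ) (hu : n ≤ u) :
    {x : auxSet (n + 1) (k + 1) u // x.1 (Fin.last n) ≠ 0} ≃ auxSet (n + 1) k (u - n) where
  toFun x := ⟨Fin.snoc (Fin.init x.1.1) (x.1.1 (Fin.last n) - 1), by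
    have h1 := x.1.2.1
    have h2 := x.1.2.2
    have ht := x.2
    rw [aux_Ssplit] at h1
    rw [aux_Wsplit] at h2
    obtain ⟨s, hs⟩ : ∃ s, x.1.1 (Fin.last n) = s + 1 :=
      ⟨x.1.1 (Fin.last n) - 1, by have := x.2; omega⟩
    rw [hs] at h1 h2
    rw [Nat.mul_succ] at h2
    constructor
    · rw [aux_Ssplit]
      simp only [Fin.init_snoc, Fin.snoc_last, hs]
      omega
    · rw [aux_Wsplit]
      simp only [Fin.init_snoc, Fin.snoc_last, hs, Nat.add_sub_cancel]
      omega⟩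
  invFun j := ⟨⟨Fin.snoc (Fin.init j.1) (j.1 (Fin.last n) + 1), by
      have h1 := j.2.1
      have h2 := j.2.2
      rw [aux_Ssplit] at h1
      rw [aux_Wsplit] at h2
      constructor
      · rw [aux_Ssplit]
        simp only [Fin.init_snoc, Fin.snoc_last]
        omega
      · rw [aux_Wsplit]
        simp only [Fin.init_snoc, Fin.snoc_last, Nat.mul_succ]
        omega⟩, by simp⟩
  left_inv x := by
    apply Subtype.ext
    apply Subtype.ext
    show Fin.snoc (Fin.init _) _ = x.1.1
    simp only [Fin.init_snoc, Fin.snoc_last]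
    rw [Nat.sub_add_cancel (Nat.one_le_iff_ne_zero.mpr x.2)]
    exact Fin.snoc_init_self x.1.1
  right_inv j := by
    apply Subtype.ext
    show Fin.snoc (Fin.init _) _ = j.1
    simp only [Fin.init_snoc, Fin.snoc_last, Nat.add_sub_cancel]
    exact Fin.snoc_init_self j.1

lemma aux_cc_rec (n k u : ℕ) :
    aux_cc (n + 1) (k + 1) u =
      aux_cc n (k + 1) u + if n ≤ u then aux_cc (n + 1) k (u - n) else 0 := by
  classical
  have key : Nat.card (auxSet (n + 1) (k + 1) u) =
      Nat.card {x : auxSet (n + 1) (k + 1) u // x.1 (Fin.last n) = 0} +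
        Nat.card {x : auxSet (n + 1) (k + 1) u // ¬ x.1 (Fin.last n) = 0} := by
    rw [← Nat.card_sum]
    exact Nat.card_congr (Equiv.sumCompl _).symm
  rw [aux_cc, key]
  congr 1
  · exact Nat.card_congr (auxEquivZero n (k + 1) u)
  · split_ifs with hu
    · exact Nat.card_congr (auxEquivPos n k u hu)
    · have : IsEmpty {x : auxSet (n + 1) (k + 1) u // ¬ x.1 (Fin.last n) = 0} := by
        refine ⟨fun x => ?_⟩
        have h2 := x.1.2.2
        rw [aux_Wsplit] at h2
        have ht : 1 ≤ x.1.1 (Fin.last n) := Nat.one_le_iff_ne_zero.mpr x.2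
        have : n ≤ n * x.1.1 (Fin.last n) := Nat.le_mul_of_pos_right n ht
        omega
      rw [Nat.card_of_isEmpty]

/-- The generating function. -/
noncomputable def auxG (n k : ℕ) : PowerSeries ℚ :=
  PowerSeries.mk fun u => (aux_cc n k u : ℚ)

lemma auxG_zero (n : ℕ) : auxG n 0 = 1 := by
  ext u
  rw [auxG, coeff_mk, aux_cc_zero, coeff_one]
  split_ifs <;> simp

lemma auxG_one (k : ℕ) : auxG 1 k = 1 := by
  ext u
  rw [auxG, coeff_mk, aux_cc_one, coeff_one]
  split_ifs <;> simp

lemma auxG_rec (n k : ℕ) :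
    auxG (n + 1) (k + 1) = auxG n (k + 1) + X ^ n * auxG (n + 1) k := by
  ext u
  rw [map_add, auxG, auxG, auxG, coeff_mk, coeff_mk, coeff_X_pow_mul', coeff_mk,
    aux_cc_rec]
  push_cast
  split_ifs <;> simp

lemma aux_main (k : ℕ) : ∀ n : ℕ,
    auxG (n + 1) k * ∏ i ∈ Finset.range k, (1 - (X : PowerSeries ℚ) ^ (i + 1)) =
      ∏ i ∈ Finset.range k, (1 - (X : PowerSeries ℚ) ^ (n + 1 + i)) := by
  induction k with
  | zero => intro n; simp [auxG_zero]
  | succ k ihk =>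
    intro n
    induction n with
    | zero =>
      simp only [Nat.zero_add]
      rw [auxG_one, one_mul]
      exact Finset.prod_congr rfl fun i _ => by rw [add_comm 1 i]
    | succ n ihn =>
      have expand : ∏ i ∈ Finset.range (k + 1), (1 - (X : PowerSeries ℚ) ^ (n + 1 + i)) =
          (1 - (X : PowerSeries ℚ) ^ (n + 1)) *
            ∏ i ∈ Finset.range k, (1 - (X : PowerSeries ℚ) ^ (n + 1 + 1 + i)) := by
        rw [Finset.prod_range_succ' (f := fun i => 1 - (X : PowerSeries ℚ) ^ (n + 1 + i)),
          add_zero, mul_comm]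
        congr 1
        exact Finset.prod_congr rfl fun i _ => by
          rw [show n + 1 + (i + 1) = n + 1 + 1 + i from by ring]
      rw [auxG_rec, add_mul, ihn,
        Finset.prod_range_succ (f := fun i => 1 - (X : PowerSeries ℚ) ^ (i + 1)),
        Finset.prod_range_succ (f := fun i => 1 - (X : PowerSeries ℚ) ^ (n + 1 + 1 + i)),
        expand]
      linear_combination ((X : PowerSeries ℚ) ^ (n + 1) * (1 - X ^ (k + 1))) * ihk (n + 1)

/-- With `m_k(u) = c_k(u) - c_k(u-1)` (and `c_k(-1) = 0`), we have
`∑_u m_k(u) x^u = ∏_{i=0}^{k-1}(1-x^{n+i}) / ∏_{i=2}^{k}(1-x^i)`,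
stated with cleared denominators in `ℚ[[x]]`. -/
theorem stmt_2 (n k : ℕ) (hn : 2 ≤ n) (hk : 2 ≤ k)
    (c : ℕ → ℕ) (hc : ∀ u, c u =
      Nat.card {i : Fin n → ℕ // (∑ j : Fin n, i j) = k ∧ (∑ j : Fin n, (j : ℕ) * i j) = u})
    (m : ℕ → ℚ) (hm : ∀ u, m u = (c u : ℚ) - (if u = 0 then 0 else (c (u - 1) : ℚ))) :
    PowerSeries.mk m *
        ∏ i ∈ Finset.range (k - 1), (1 - (PowerSeries.X : PowerSeries ℚ) ^ (i + 2)) =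
      ∏ i ∈ Finset.range k, (1 - (PowerSeries.X : PowerSeries ℚ) ^ (n + i)) := by
  have hcc : ∀ u, c u = aux_cc n k u := fun u => hc u
  have hmk : PowerSeries.mk m = (1 - X) * auxG n k := by
    ext u
    rw [coeff_mk, hm, sub_mul, one_mul, map_sub, auxG, coeff_mk,
      show (X : PowerSeries ℚ) = X ^ 1 by rw [pow_one], coeff_X_pow_mul', coeff_mk, hcc]
    rcases eq_or_ne u 0 with rfl | hu
    · simp
    · rw [if_neg hu, if_pos (Nat.one_le_iff_ne_zero.mpr hu), hcc]
  obtain ⟨n', rfl⟩ : ∃ n', n = n' + 1 := ⟨n - 1, by omega⟩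
  have hD : (1 - (X : PowerSeries ℚ)) *
      ∏ i ∈ Finset.range (k - 1), (1 - (X : PowerSeries ℚ) ^ (i + 2)) =
      ∏ i ∈ Finset.range k, (1 - (X : PowerSeries ℚ) ^ (i + 1)) := by
    obtain ⟨k', rfl⟩ : ∃ k', k = k' + 1 := ⟨k - 1, by omega⟩
    rw [Finset.prod_range_succ' (f := fun i => 1 - (X : PowerSeries ℚ) ^ (i + 1))]
    simp only [Nat.add_sub_cancel, zero_add, pow_one]
    rw [mul_comm]
  rw [hmk, mul_assoc, mul_left_comm, hD]
  exact aux_main k n'
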